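/- Let T be an extension of Robinson arithmetic Q with Pr_T definable, and let ψ, n, t be as in Boolos's construction. If T ⊢ ψ(n,t), then the formula ψ(v₀,t) names the number n, i.e. T ⊢ (∀v₀)(ψ(v₀,t) ↔ v₀ = n). -/

import Mathlib

/-!
In a model of `T`, `ψ(a, t)` says that `a` is the first element at which `φ(·, t)` fails, and
`T ⊢ ψ(n, t)` makes the numeral `n` such a first failure. Two first failures `a`, `c` coincide
as soon as `a < c ∨ a = c ∨ c < a`, and Robinson arithmetic proves this trichotomy between an
arbitrary element and a numeral. Hence `ψ(a, t)` holds exactly when `a = n`.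
-/

namespace Boolos

/-- Terms of the first-order language of arithmetic: variables v₀,v₁,…, 0, successor s, +, ·. -/
inductive Term : Type
  | var : ℕ → Term
  | zero : Term
  | succ : Term → Term
  | add : Term → Term → Term
  | mul : Term → Term → Term
  deriving DecidableEq

/-- Formulas of the first-order language of arithmetic. -/
inductive Formula : Type
  | eq : Term → Term → Formula
  | lt : Term → Term → Formula
  | not : Formula → Formula
  | and : Formula → Formula → Formula
  | or : Formula → Formula → Formula
  | imp : Formula → Formula → Formula
  | all : ℕ → Formula → Formula
  | ex : ℕ → Formula → Formula
  deriving DecidableEq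

/-- The primitive symbols of the language (finitely many apart from the variables). -/
inductive Symbol : Type
  | zero : Symbol
  | succ : Symbol
  | plus : Symbol
  | times : Symbol
  | eqs : Symbol
  | lts : Symbol
  | nots : Symbol
  | ands : Symbol
  | ors : Symbol
  | imps : Symbol
  | alls : Symbol
  | exs : Symbol
  | var : ℕ → Symbol
  deriving DecidableEq

/-- Gödel numbers of the primitive symbols. -/
def Symbol.code : Symbol → ℕ
  | .zero => 1
  | .succ => 2
  | .plus => 3
  | .times => 4
  | .eqs => 5
  | .lts => 6
  | .nots => 7
  | .ands => 8
  | .ors => 9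
  | .imps => 10
  | .alls => 11
  | .exs => 12
  | .var n => 13 + n

/-- The sequence of symbols occurring in a term. -/
def Term.symbols : Term → List Symbol
  | .var i => [.var i]
  | .zero => [.zero]
  | .succ t => .succ :: t.symbols
  | .add t u => t.symbols ++ .plus :: u.symbols
  | .mul t u => t.symbols ++ .times :: u.symbols

/-- The sequence of symbols occurring in a formula. -/
def Formula.symbols : Formula → List Symbol
  | .eq t u => t.symbols ++ .eqs :: u.symbols
  | .lt t u => t.symbols ++ .lts :: u.symbols
  | .not φ => .nots :: φ.symbols
  | .and φ ψ => φ.symbols ++ .ands :: ψ.symbols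
  | .or φ ψ => φ.symbols ++ .ors :: ψ.symbols
  | .imp φ ψ => φ.symbols ++ .imps :: ψ.symbols
  | .all i φ => .alls :: .var i :: φ.symbols
  | .ex i φ => .exs :: .var i :: φ.symbols

/-- |e| : the length (number of symbols) of a term. -/
def Term.length (t : Term) : ℕ := t.symbols.length

/-- |μ| : the length (number of symbols) of a formula. -/
def Formula.length (φ : Formula) : ℕ := φ.symbols.length

/-- A fixed standard (pairing-based, injective) Gödel numbering of terms. -/
def Term.code : Term → ℕ
  | .var i => Nat.pair 0 i
  | .zero => Nat.pair 1 0
  | .succ t => Nat.pair 2 t.code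
  | .add t u => Nat.pair 3 (Nat.pair t.code u.code)
  | .mul t u => Nat.pair 4 (Nat.pair t.code u.code)

/-- ⌜μ⌝ : the Gödel number of a formula. -/
def Formula.gnum : Formula → ℕ
  | .eq t u => Nat.pair 0 (Nat.pair t.code u.code)
  | .lt t u => Nat.pair 1 (Nat.pair t.code u.code)
  | .not φ => Nat.pair 2 φ.gnum
  | .and φ ψ => Nat.pair 3 (Nat.pair φ.gnum ψ.gnum)
  | .or φ ψ => Nat.pair 4 (Nat.pair φ.gnum ψ.gnum)
  | .imp φ ψ => Nat.pair 5 (Nat.pair φ.gnum ψ.gnum)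
  | .all i φ => Nat.pair 6 (Nat.pair i φ.gnum)
  | .ex i φ => Nat.pair 7 (Nat.pair i φ.gnum)

/-- The variables occurring in a term. -/
def Term.varsOf : Term → Finset ℕ
  | .var i => {i}
  | .zero => ∅
  | .succ t => t.varsOf
  | .add t u => t.varsOf ∪ u.varsOf
  | .mul t u => t.varsOf ∪ u.varsOf

/-- All variables (free or bound) occurring in a formula. -/
def Formula.allVars : Formula → Finset ℕ
  | .eq t u => t.varsOf ∪ u.varsOf
  | .lt t u => t.varsOf ∪ u.varsOf
  | .not φ => φ.allVars
  | .and φ ψ => φ.allVars ∪ ψ.allVars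
  | .or φ ψ => φ.allVars ∪ ψ.allVars
  | .imp φ ψ => φ.allVars ∪ ψ.allVars
  | .all i φ => insert i φ.allVars
  | .ex i φ => insert i φ.allVars

/-- The free variables of a formula. -/
def Formula.freeVars : Formula → Finset ℕ
  | .eq t u => t.varsOf ∪ u.varsOf
  | .lt t u => t.varsOf ∪ u.varsOf
  | .not φ => φ.freeVars
  | .and φ ψ => φ.freeVars ∪ ψ.freeVars
  | .or φ ψ => φ.freeVars ∪ ψ.freeVars
  | .imp φ ψ => φ.freeVars ∪ ψ.freeVars
  | .all i φ => φ.freeVars.erase i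
  | .ex i φ => φ.freeVars.erase i

/-- Substitution of a term for a variable in a term. -/
def Term.subst : Term → ℕ → Term → Term
  | .var i, x, s => if i = x then s else .var i
  | .zero, _, _ => .zero
  | .succ t, x, s => .succ (t.subst x s)
  | .add t u, x, s => .add (t.subst x s) (u.subst x s)
  | .mul t u, x, s => .mul (t.subst x s) (u.subst x s)

/-- Substitution of a term for the free occurrences of a variable in a formula. -/
def Formula.subst : Formula → ℕ → Term → Formula
  | .eq t u, x, s => .eq (t.subst x s) (u.subst x s)
  | .lt t u, x, s => .lt (t.subst x s) (u.subst x s)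
  | .not φ, x, s => .not (φ.subst x s)
  | .and φ ψ, x, s => .and (φ.subst x s) (ψ.subst x s)
  | .or φ ψ, x, s => .or (φ.subst x s) (ψ.subst x s)
  | .imp φ ψ, x, s => .imp (φ.subst x s) (ψ.subst x s)
  | .all i φ, x, s => if i = x then .all i φ else .all i (φ.subst x s)
  | .ex i φ, x, s => if i = x then .ex i φ else .ex i (φ.subst x s)

/-- The number of occurrences of a variable in a term. -/
def Term.countOcc : Term → ℕ → ℕ
  | .var i, x => if i = x then 1 else 0
  | .zero, _ => 0
  | .succ t, x => t.countOcc x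
  | .add t u, x => t.countOcc x + u.countOcc x
  | .mul t u, x => t.countOcc x + u.countOcc x

/-- The number of free occurrences of a variable in a formula. -/
def Formula.countFreeOcc : Formula → ℕ → ℕ
  | .eq t u, x => t.countOcc x + u.countOcc x
  | .lt t u, x => t.countOcc x + u.countOcc x
  | .not φ, x => φ.countFreeOcc x
  | .and φ ψ, x => φ.countFreeOcc x + ψ.countFreeOcc x
  | .or φ ψ, x => φ.countFreeOcc x + ψ.countFreeOcc x
  | .imp φ ψ, x => φ.countFreeOcc x + ψ.countFreeOcc x
  | .all i φ, x => if i = x then 0 else φ.countFreeOcc x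
  | .ex i φ, x => if i = x then 0 else φ.countFreeOcc x

/-- The numeral s s … s 0 for a natural number. -/
def numeral : ℕ → Term
  | 0 => .zero
  | n + 1 => .succ (numeral n)

/-- Structures for the language of arithmetic. -/
structure Struct where
  carrier : Type
  zero : carrier
  succ : carrier → carrier
  add : carrier → carrier → carrier
  mul : carrier → carrier → carrier
  lt : carrier → carrier → Prop

/-- The value of a term in a structure under an assignment. -/
def Term.val (M : Struct) (v : ℕ → M.carrier) : Term → M.carrier
  | .var i => v i
  | .zero => M.zero
  | .succ t => M.succ (Term.val M v t)
  | .add t u => M.add (Term.val M v t) (Term.val M v u)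
  | .mul t u => M.mul (Term.val M v t) (Term.val M v u)

/-- Satisfaction of a formula in a structure under an assignment. -/
def Formula.Realize (M : Struct) : (ℕ → M.carrier) → Formula → Prop
  | v, .eq t u => Term.val M v t = Term.val M v u
  | v, .lt t u => M.lt (Term.val M v t) (Term.val M v u)
  | v, .not φ => ¬ Formula.Realize M v φ
  | v, .and φ ψ => Formula.Realize M v φ ∧ Formula.Realize M v ψ
  | v, .or φ ψ => Formula.Realize M v φ ∨ Formula.Realize M v ψ
  | v, .imp φ ψ => Formula.Realize M v φ → Formula.Realize M v ψ
  | v, .all i φ => ∀ a : M.carrier, Formula.Realize M (Function.update v i a) φ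
  | v, .ex i φ => ∃ a : M.carrier, Formula.Realize M (Function.update v i a) φ

/-- ω : the standard model of arithmetic. -/
@[reducible] def stdModel : Struct :=
  { carrier := ℕ, zero := 0, succ := Nat.succ, add := (· + ·), mul := (· * ·),
    lt := (· < ·) }

/-- A formula is true if it holds in the standard model ω (under every assignment). -/
def IsTrue (φ : Formula) : Prop := ∀ v : ℕ → ℕ, Formula.Realize stdModel v φ

/-- The value of a (closed) term in the standard model ω. -/
def Term.valNat (t : Term) : ℕ := Term.val stdModel (fun _ => 0) t

/-- A sentence is a formula with no free variables. -/
def Formula.IsSentence (φ : Formula) : Prop := φ.freeVars = ∅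

/-- Provability from a theory; by the Gödel completeness theorem, identified with
semantic consequence. -/
def Proves (T : Set Formula) (φ : Formula) : Prop :=
  ∀ (M : Struct) (v : ℕ → M.carrier),
    (∀ ψ ∈ T, Formula.Realize M v ψ) → Formula.Realize M v φ

/-- Consistency: no formula is both provable and refutable. -/
def Consistent (T : Set Formula) : Prop :=
  ¬ ∃ φ : Formula, Proves T φ ∧ Proves T (.not φ)

/-- The biconditional, as an abbreviation. -/
def Formula.iffF (φ ψ : Formula) : Formula := .and (.imp φ ψ) (.imp ψ φ)

def v0 : Term := .var 0
def v1 : Term := .var 1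
def v2 : Term := .var 2

/-- The axioms of Robinson arithmetic Q (with < defined as usual). -/
def QAxioms : Set Formula :=
  { .all 0 (.all 1 (.imp (.eq (.succ v0) (.succ v1)) (.eq v0 v1))),
    .all 0 (.not (.eq (.succ v0) .zero)),
    .all 0 (.imp (.not (.eq v0 .zero)) (.ex 1 (.eq v0 (.succ v1)))),
    .all 0 (.eq (.add v0 .zero) v0),
    .all 0 (.all 1 (.eq (.add v0 (.succ v1)) (.succ (.add v0 v1)))),
    .all 0 (.eq (.mul v0 .zero) .zero),
    .all 0 (.all 1 (.eq (.mul v0 (.succ v1)) (.add (.mul v0 v1) v0))),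
    .all 0 (.all 1 (Formula.iffF (.lt v0 v1) (.ex 2 (.eq (.add v2 (.succ v0)) v1)))) }

/-- Pr_S : the set of Gödel numbers of sentences provable in S. -/
def PrSet (T : Set Formula) : Set ℕ :=
  {m | ∃ σ : Formula, σ.IsSentence ∧ Proves T σ ∧ m = σ.gnum}

/-- A formula μ with at most the free variable v₀ names the number i in T
if T ⊢ (∀v₀)(μ(v₀) ↔ v₀ = i). -/
def Names (T : Set Formula) (μ : Formula) (i : ℕ) : Prop :=
  μ.freeVars ⊆ {0} ∧ Proves T (.all 0 (Formula.iffF μ (.eq v0 (numeral i))))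

/-- i is named in T by some formula of length < m. -/
def Nameable (T : Set Formula) (m i : ℕ) : Prop :=
  ∃ μ : Formula, μ.length < m ∧ Names T μ i

/-- φ(v₀) defines the set A in the standard model ω. -/
def DefinesSet (φ : Formula) (A : Set ℕ) : Prop :=
  φ.freeVars ⊆ {0} ∧ ∀ i : ℕ, i ∈ A ↔ IsTrue (φ.subst 0 (numeral i))

/-- A set of natural numbers is definable (in ω). -/
def Definable (A : Set ℕ) : Prop := ∃ φ : Formula, DefinesSet φ A

/-- φ(v₀,v₁) defines the binary relation R in the standard model ω. -/
def DefinesRel (φ : Formula) (R : ℕ → ℕ → Prop) : Prop :=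
  φ.freeVars ⊆ {0, 1} ∧
    ∀ i j : ℕ, R i j ↔ IsTrue ((φ.subst 0 (numeral i)).subst 1 (numeral j))

/-- The relation B of Boolos's construction: (i,j) ∈ B iff some formula μ with at most
the free variable v₀, with ⌜μ⌝ < g(j) and |μ| < j, names i. -/
def BRel (T : Set Formula) (g : ℕ → ℕ) (i j : ℕ) : Prop :=
  ∃ μ : Formula, μ.gnum < g j ∧ μ.length < j ∧ Names T μ i

/-- g is a recursive function bounding Gödel numbers in terms of length, as in the
construction: whenever all variables of μ are among the first j ones and |μ| < j,
we have ⌜μ⌝ < g(j). -/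
def GoodBound (g : ℕ → ℕ) : Prop :=
  Computable g ∧
    ∀ (μ : Formula) (j : ℕ), μ.allVars ⊆ Finset.range j → μ.length < j → μ.gnum < g j

/-- ψ(v₀,v₁) ≔ ¬φ(v₀,v₁) ∧ (∀v₂ < v₀) φ(v₂,v₁). -/
def psiOf (φ : Formula) : Formula :=
  .and (.not φ) (.all 2 (.imp (.lt v2 v0) (φ.subst 0 v2)))

/-- The closed term t ≔ 10·(k·k). -/
def tTerm (k : ℕ) : Term := .mul (numeral 10) (.mul (numeral k) (numeral k))

def Formula.boundVars : Formula → Finset ℕ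
  | .eq _ _ | .lt _ _ => ∅
  | .not φ => φ.boundVars
  | .and φ ψ | .or φ ψ | .imp φ ψ => φ.boundVars ∪ ψ.boundVars
  | .all i φ | .ex i φ => insert i φ.boundVars

theorem Formula.boundVars_subset_allVars (φ : Formula) : φ.boundVars ⊆ φ.allVars := by
  induction φ with
  | eq | lt => simp [Formula.boundVars]
  | not φ ih => exact ih
  | and φ ψ ihφ ihψ | or φ ψ ihφ ihψ | imp φ ψ ihφ ihψ =>
    exact Finset.union_subset_union ihφ ihψ
  | all i φ ih | ex i φ ih => exact Finset.insert_subset_insert i ih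

theorem Term.varsOf_subst (t : Term) (x : ℕ) (s : Term) :
    (t.subst x s).varsOf ⊆ t.varsOf.erase x ∪ s.varsOf := by
  induction t with
  | var i =>
    by_cases h : i = x
    · simp [Term.subst, h]
    · simp [Term.subst, Term.varsOf, h]
  | zero => simp [Term.subst, Term.varsOf]
  | succ t ih => exact ih
  | add t u iht ihu | mul t u iht ihu =>
    simp only [Term.subst, Term.varsOf, Finset.erase_union_distrib]
    grind

theorem Formula.freeVars_subst (φ : Formula) (x : ℕ) (s : Term) :
    (φ.subst x s).freeVars ⊆ φ.freeVars.erase x ∪ s.varsOf := by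
  induction φ with
  | eq t u | lt t u =>
    have := Term.varsOf_subst t x s
    have := Term.varsOf_subst u x s
    simp only [Formula.subst, Formula.freeVars, Finset.erase_union_distrib]
    grind
  | not φ ih => exact ih
  | and φ ψ ihφ ihψ | or φ ψ ihφ ihψ | imp φ ψ ihφ ihψ =>
    simp only [Formula.subst, Formula.freeVars, Finset.erase_union_distrib]
    grind
  | all i φ ih | ex i φ ih =>
    by_cases hix : i = x
    · subst hix
      simp [Formula.subst, Formula.freeVars]
    · simp only [Formula.subst, if_neg hix, Formula.freeVars]
      grind

theorem numeral_varsOf (n : ℕ) : (numeral n).varsOf = ∅ := by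
  induction n with
  | zero => rfl
  | succ n ih => exact ih

theorem tTerm_varsOf (k : ℕ) : (tTerm k).varsOf = ∅ := by
  simp [tTerm, Term.varsOf, numeral_varsOf]

theorem freeVars_psiOf_subset {φ : Formula} (hφ : φ.freeVars ⊆ {0, 1}) :
    (psiOf φ).freeVars ⊆ {0, 1} := by
  have := Formula.freeVars_subst φ 0 v2
  simp only [psiOf, Formula.freeVars, v0, v2, Term.varsOf] at this ⊢
  grind

theorem Term.val_congr {M : Struct} {t : Term} {v w : ℕ → M.carrier}
    (h : ∀ i ∈ t.varsOf, v i = w i) : t.val M v = t.val M w := by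
  induction t with
  | var i => exact h i (Finset.mem_singleton_self i)
  | zero => rfl
  | succ t ih => exact congrArg M.succ (ih h)
  | add t u iht ihu | mul t u iht ihu =>
    simp only [Term.varsOf, Finset.mem_union] at h
    simp only [Term.val, iht fun i hi => h i (.inl hi), ihu fun i hi => h i (.inr hi)]

theorem Term.val_eq_of_varsOf_eq_empty {M : Struct} {t : Term} (ht : t.varsOf = ∅)
    (v w : ℕ → M.carrier) : t.val M v = t.val M w :=
  Term.val_congr (by simp [ht])

theorem Formula.realize_congr {M : Struct} {φ : Formula} {v w : ℕ → M.carrier}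
    (h : ∀ i ∈ φ.freeVars, v i = w i) : φ.Realize M v ↔ φ.Realize M w := by
  induction φ generalizing v w with
  | eq t u | lt t u =>
    simp only [Formula.freeVars, Finset.mem_union] at h
    simp only [Formula.Realize, Term.val_congr fun i hi => h i (.inl hi),
      Term.val_congr fun i hi => h i (.inr hi)]
  | not φ ih => exact not_congr (ih h)
  | and φ ψ ihφ ihψ | or φ ψ ihφ ihψ | imp φ ψ ihφ ihψ =>
    simp only [Formula.freeVars, Finset.mem_union] at h
    simp only [Formula.Realize, ihφ fun i hi => h i (.inl hi), ihψ fun i hi => h i (.inr hi)]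
  | all j φ ih | ex j φ ih =>
    have hupd (a : M.carrier) :
        ∀ i ∈ φ.freeVars, Function.update v j a i = Function.update w j a i := by
      intro i hi
      by_cases hij : i = j
      · simp [hij]
      · simpa [Function.update_of_ne hij] using h i (Finset.mem_erase.2 ⟨hij, hi⟩)
    simp only [Formula.Realize, fun a => ih (hupd a)]

theorem Term.val_subst {M : Struct} (t : Term) (x : ℕ) (s : Term) (v : ℕ → M.carrier) :
    (t.subst x s).val M v = t.val M (Function.update v x (s.val M v)) := by
  induction t with
  | var i =>
    by_cases h : i = x
    · subst h; simp [Term.subst, Term.val]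
    · simp [Term.subst, Term.val, h]
  | zero => rfl
  | succ t ih => simp [Term.subst, Term.val, ih]
  | add t u iht ihu | mul t u iht ihu => simp [Term.subst, Term.val, iht, ihu]

theorem Formula.realize_subst {M : Struct} {φ : Formula} {s : Term} (x : ℕ)
    (hs : Disjoint s.varsOf φ.boundVars) (v : ℕ → M.carrier) :
    (φ.subst x s).Realize M v ↔ φ.Realize M (Function.update v x (s.val M v)) := by
  induction φ generalizing v with
  | eq | lt => simp [Formula.subst, Formula.Realize, Term.val_subst]
  | not φ ih => exact not_congr (ih hs v)
  | and φ ψ ihφ ihψ | or φ ψ ihφ ihψ | imp φ ψ ihφ ihψ =>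
    simp only [Formula.boundVars, Finset.disjoint_union_right] at hs
    simp only [Formula.subst, Formula.Realize, ihφ hs.1, ihψ hs.2]
  | all i φ ih | ex i φ ih =>
    simp only [Formula.boundVars, Finset.disjoint_insert_right] at hs
    by_cases hix : i = x
    · subst hix
      simp [Formula.subst, Formula.Realize]
    · have hval (a : M.carrier) : s.val M (Function.update v i a) = s.val M v :=
        Term.val_congr fun j hj => Function.update_of_ne (by rintro rfl; exact hs.1 hj) _ _
      simp only [Formula.subst, if_neg hix, Formula.Realize, ih hs.2, hval,
        Function.update_comm hix]

theorem Formula.realize_subst_of_varsOf_eq_empty {M : Struct} {φ : Formula} {s : Term} (x : ℕ)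
    (hs : s.varsOf = ∅) (v : ℕ → M.carrier) :
    (φ.subst x s).Realize M v ↔ φ.Realize M (Function.update v x (s.val M v)) :=
  Formula.realize_subst x (by simp [hs]) v

def Struct.num (M : Struct) : ℕ → M.carrier
  | 0 => M.zero
  | n + 1 => M.succ (M.num n)

theorem Struct.num_eq_iterate (M : Struct) (n : ℕ) : M.num n = M.succ^[n] M.zero := by
  induction n with
  | zero => rfl
  | succ n ih => rw [Function.iterate_succ_apply', ← ih]; rfl

theorem Term.val_numeral (M : Struct) (v : ℕ → M.carrier) (n : ℕ) :
    (numeral n).val M v = M.num n := by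
  induction n with
  | zero => rfl
  | succ n ih => exact congrArg M.succ ih

namespace QModel

variable {M : Struct} {w : ℕ → M.carrier}

theorem exists_eq_succ (hQ : ∀ ψ ∈ QAxioms, ψ.Realize M w) {a : M.carrier}
    (ha : a ≠ M.zero) :
    ∃ b, a = M.succ b := by
  have := hQ (.all 0 (.imp (.not (.eq v0 .zero)) (.ex 1 (.eq v0 (.succ v1))))) (by simp [QAxioms])
  simpa [Formula.Realize, Term.val, v0, v1] using this a ha

theorem add_zero (hQ : ∀ ψ ∈ QAxioms, ψ.Realize M w) (a : M.carrier) :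
    M.add a M.zero = a := by
  have := hQ (.all 0 (.eq (.add v0 .zero) v0)) (by simp [QAxioms])
  simpa [Formula.Realize, Term.val, v0] using this a

theorem add_succ (hQ : ∀ ψ ∈ QAxioms, ψ.Realize M w) (a b : M.carrier) :
    M.add a (M.succ b) = M.succ (M.add a b) := by
  have := hQ (.all 0 (.all 1 (.eq (.add v0 (.succ v1)) (.succ (.add v0 v1))))) (by simp [QAxioms])
  simpa [Formula.Realize, Term.val, v0, v1] using this a b

theorem lt_iff (hQ : ∀ ψ ∈ QAxioms, ψ.Realize M w) (a b : M.carrier) :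
    M.lt a b ↔ ∃ c, M.add c (M.succ a) = b := by
  have := hQ (.all 0 (.all 1 (Formula.iffF (.lt v0 v1) (.ex 2 (.eq (.add v2 (.succ v0)) v1)))))
    (by simp [QAxioms])
  simp only [Formula.iffF, Formula.Realize] at this
  simpa [Term.val, v0, v1, v2] using iff_iff_implies_and_implies.2 (this a b)

theorem add_num (hQ : ∀ ψ ∈ QAxioms, ψ.Realize M w) (a : M.carrier) (j : ℕ) :
    M.add a (M.num j) = M.succ^[j] a := by
  induction j with
  | zero => exact add_zero hQ a
  | succ j ih => rw [Function.iterate_succ_apply', ← ih]; exact add_succ hQ a (M.num j)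

theorem num_lt_num (hQ : ∀ ψ ∈ QAxioms, ψ.Realize M w) {m n : ℕ} (hmn : m < n) :
    M.lt (M.num m) (M.num n) := by
  refine (lt_iff hQ _ _).2 ⟨M.num (n - (m + 1)), ?_⟩
  rw [show M.succ (M.num m) = M.num (m + 1) from rfl, add_num hQ, M.num_eq_iterate,
    M.num_eq_iterate, ← Function.iterate_add_apply]
  congr 1
  omega

theorem eq_num_or_num_lt (hQ : ∀ ψ ∈ QAxioms, ψ.Realize M w) (n : ℕ) (a : M.carrier) :
    (∃ m ≤ n, a = M.num m) ∨ M.lt (M.num n) a := by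
  induction n generalizing a with
  | zero =>
    by_cases ha : a = M.zero
    · exact .inl ⟨0, le_rfl, ha⟩
    · obtain ⟨b, rfl⟩ := exists_eq_succ hQ ha
      refine .inr ((lt_iff hQ _ _).2 ⟨b, ?_⟩)
      rw [add_succ hQ]
      exact congrArg M.succ (add_zero hQ b)
  | succ n ih =>
    obtain ⟨m, hm, rfl⟩ | hlt := ih a
    · exact .inl ⟨m, Nat.le_succ_of_le hm, rfl⟩
    obtain ⟨c, rfl⟩ := (lt_iff hQ _ _).1 hlt
    by_cases hc : c = M.zero
    · refine .inl ⟨n + 1, le_rfl, ?_⟩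
      rw [hc, show M.succ (M.num n) = M.num (n + 1) from rfl, add_num hQ, M.num_eq_iterate]
    · obtain ⟨d, rfl⟩ := exists_eq_succ hQ hc
      refine .inr ((lt_iff hQ _ _).2 ⟨d, ?_⟩)
      change M.add d (M.num (n + 2)) = M.add (M.succ d) (M.num (n + 1))
      rw [add_num hQ, add_num hQ]
      rfl

theorem lt_trichotomy_num (hQ : ∀ ψ ∈ QAxioms, ψ.Realize M w) (n : ℕ) (a : M.carrier) :
    M.lt a (M.num n) ∨ a = M.num n ∨ M.lt (M.num n) a := by
  obtain ⟨m, hm, rfl⟩ | h := eq_num_or_num_lt hQ n a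
  · obtain hm | rfl := hm.lt_or_eq
    · exact .inl (num_lt_num hQ hm)
    · exact .inr (.inl rfl)
  · exact .inr (.inr h)

end QModel

def FirstFailure {α : Type*} (r : α → α → Prop) (A : α → Prop) (a : α) : Prop :=
  ¬A a ∧ ∀ b, r b a → A b

theorem FirstFailure.eq {α : Type*} {r : α → α → Prop} {A : α → Prop} {a c : α}
    (ha : FirstFailure r A a) (hc : FirstFailure r A c) (htri : r a c ∨ a = c ∨ r c a) :
    a = c := by
  obtain h | h | h := htri
  · exact absurd (hc.2 a h) ha.1
  · exact h
  · exact absurd (ha.2 c h) hc.1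

theorem realize_psiOf {M : Struct} {φ : Formula} (h2free : 2 ∉ φ.freeVars)
    (h2bound : 2 ∉ φ.boundVars) (v : ℕ → M.carrier) :
    (psiOf φ).Realize M v ↔
      FirstFailure M.lt (fun b => φ.Realize M (Function.update v 0 b)) (v 0) := by
  have hsubst (b : M.carrier) :
      (φ.subst 0 v2).Realize M (Function.update v 2 b) ↔
        φ.Realize M (Function.update v 0 b) := by
    rw [Formula.realize_subst 0 (by simpa [v2, Term.varsOf] using h2bound)]
    refine Formula.realize_congr fun i hi => ?_
    have hi2 : i ≠ 2 := by rintro rfl; exact h2free hi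
    by_cases hi0 : i = 0
    · simp [hi0, v2, Term.val]
    · simp [Function.update_of_ne hi0, Function.update_of_ne hi2]
  simp only [psiOf, FirstFailure, Formula.Realize, hsubst]
  simp [Term.val, v0, v2]

theorem names_psiOf_subst {T : Set Formula} {φ : Formula} {t : Term} {n : ℕ}
    (hQT : QAxioms ⊆ T) (hφ : φ.freeVars ⊆ {0, 1}) (h2 : 2 ∉ φ.allVars)
    (ht : t.varsOf = ∅)
    (hprov : Proves T (((psiOf φ).subst 0 (numeral n)).subst 1 t)) :
    Names T ((psiOf φ).subst 1 t) n := by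
  have h2free : 2 ∉ φ.freeVars := fun h => by simpa using hφ h
  have h2bound : 2 ∉ φ.boundVars := fun h => h2 (φ.boundVars_subset_allVars h)
  refine ⟨fun i hi => ?_, fun M w hT => ?_⟩
  · have hi' := Formula.freeVars_subst (psiOf φ) 1 t hi
    rw [ht, Finset.union_empty, Finset.mem_erase] at hi'
    have := freeVars_psiOf_subset hφ hi'.2
    simp_all
  · have hQ : ∀ ψ ∈ QAxioms, ψ.Realize M w := fun ψ hψ => hT ψ (hQT hψ)
    set w' := Function.update w 1 (t.val M w)
    set A : M.carrier → Prop := fun b => φ.Realize M (Function.update w' 0 b)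
    have hψ (a : M.carrier) :
        ((psiOf φ).subst 1 t).Realize M (Function.update w 0 a) ↔ FirstFailure M.lt A a := by
      rw [Formula.realize_subst_of_varsOf_eq_empty 1 ht, Term.val_eq_of_varsOf_eq_empty ht _ w,
        Function.update_comm (by decide : (0 : ℕ) ≠ 1), realize_psiOf h2free h2bound]
      simp [A, w']
    have hn : FirstFailure M.lt A (M.num n) := by
      have := hprov M w hT
      rw [Formula.realize_subst_of_varsOf_eq_empty 1 ht,
        Formula.realize_subst_of_varsOf_eq_empty 0 (numeral_varsOf n),
        realize_psiOf h2free h2bound, Term.val_numeral] at this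
      simpa [A, w'] using this
    intro a
    simp only [Formula.iffF, Formula.Realize, hψ, Term.val, v0, Function.update_self,
      Term.val_numeral]
    exact ⟨fun ha => ha.eq hn (QModel.lt_trichotomy_num hQ n a), fun h => h ▸ hn⟩

theorem psi_names_n_general
    (T : Set Formula)
    (hQT : QAxioms ⊆ T)
    (g : ℕ → ℕ)
    (φ : Formula) (hφ : DefinesRel φ (BRel T g)) (hφ2 : 2 ∉ φ.allVars)
    (k : ℕ)
    (n : ℕ)
    (hprov : Proves T (((psiOf φ).subst 0 (numeral n)).subst 1 (tTerm k))) :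
    Names T ((psiOf φ).subst 1 (tTerm k)) n :=
  names_psiOf_subst hQT hφ.1 hφ2 (tTerm_varsOf k) hprov

/-- If T extends Q, Pr_T is definable, and T ⊢ ψ(n,t), then the formula ψ(v₀,t)
names the number n, i.e. T ⊢ (∀v₀)(ψ(v₀,t) ↔ v₀ = n). -/
theorem psi_names_n
    (T : Set Formula) (hTsent : ∀ σ ∈ T, σ.IsSentence)
    (hQT : QAxioms ⊆ T) (hdef : Definable (PrSet T))
    (g : ℕ → ℕ) (hg : GoodBound g)
    (φ : Formula) (hφ : DefinesRel φ (BRel T g)) (hφ2 : 2 ∉ φ.allVars)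
    (k₂ : ℕ) (hk₂ : (psiOf φ).countFreeOcc 1 < k₂)
    (k : ℕ) (hk : k = (psiOf φ).length * k₂)
    (n : ℕ) (hn : ¬ Nameable T (10 * (k * k)) n)
    (hleast : ∀ m < n, Nameable T (10 * (k * k)) m)
    (hprov : Proves T (((psiOf φ).subst 0 (numeral n)).subst 1 (tTerm k))) :
    Names T ((psiOf φ).subst 1 (tTerm k)) n :=
  psi_names_n_general T hQT g φ hφ hφ2 k n hprov

end Boolos
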